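/- arXiv:1502.07796 — 3 statements merged into one kernel-verified Lean document; each statement's English description precedes it below -/
import Mathlib

section
/- Let R be a commutative ring. For finite rooted directed acyclic multigraphs G₁ and G₂ whose marked root vertices are sources, and for a vertex v ∈ V(G₁), let G₁ ⊲_v G₂ denote the rooted directed acyclic multigraph obtained from the disjoint union of G₁ and G₂ by identifying the root of G₂ with the vertex v, with root the root of G₁. Then on the free R-module spanned by isomorphism classes of finite rooted directed acyclic multigraphs with source root, the operator G₁ ⊲ G₂ := Σ_{v ∈ V(G₁)} [G₁ ⊲_v G₂], extended bilinearly, is well defined and satisfies the right pre-Lie identity. -/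
open scoped Classical

noncomputable section

/-- A finite rooted directed multigraph: finite vertex and edge types together with
source and target maps, and a marked root vertex. -/
structure RootedMultigraph : Type 1 where
  V : Type
  E : Type
  [fintV : Fintype V]
  [fintE : Fintype E]
  src : E → V
  tgt : E → V
  root : V

attribute [instance] RootedMultigraph.fintV RootedMultigraph.fintE

namespace RootedMultigraph

/-- A graph is acyclic if it contains no directed cycle. -/
def Acyclic (G : RootedMultigraph) : Prop :=
  ¬ ∃ (n : ℕ) (e : Fin (n + 1) → G.E), ∀ i, G.tgt (e i) = G.src (e (i + 1))

/-- The root vertex is a source: no edge has it as target. -/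
def RootIsSource (G : RootedMultigraph) : Prop := ∀ e : G.E, G.tgt e ≠ G.root

/-- A rooted directed acyclic multigraph with source root. -/
def Good (G : RootedMultigraph) : Prop := G.Acyclic ∧ G.RootIsSource

/-- `G₁ ⊲_v G₂`: the graph obtained from the disjoint union of `G₁` and `G₂` by
identifying the root of `G₂` with the vertex `v` of `G₁`, rooted at the root of `G₁`. -/
def glue (G₁ : RootedMultigraph) (v : G₁.V) (G₂ : RootedMultigraph) : RootedMultigraph where
  V := G₁.V ⊕ {w : G₂.V // w ≠ G₂.root}
  E := G₁.E ⊕ G₂.E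
  src := Sum.elim (fun e => Sum.inl (G₁.src e))
    (fun e => if h : G₂.src e = G₂.root then Sum.inl v else Sum.inr ⟨G₂.src e, h⟩)
  tgt := Sum.elim (fun e => Sum.inl (G₁.tgt e))
    (fun e => if h : G₂.tgt e = G₂.root then Sum.inl v else Sum.inr ⟨G₂.tgt e, h⟩)
  root := Sum.inl G₁.root

/-- Isomorphism of rooted multigraphs. -/
def Iso (G G' : RootedMultigraph) : Prop :=
  ∃ (eV : G.V ≃ G'.V) (eE : G.E ≃ G'.E),
    (∀ e, eV (G.src e) = G'.src (eE e)) ∧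
    (∀ e, eV (G.tgt e) = G'.tgt (eE e)) ∧ eV G.root = G'.root

end RootedMultigraph

/-- Finite rooted directed acyclic multigraphs with source root. -/
abbrev RootedDAG := {G : RootedMultigraph // G.Good}

def dagIsoRel : RootedDAG → RootedDAG → Prop := fun G G' => G.1.Iso G'.1

/-- Isomorphism classes of finite rooted directed acyclic multigraphs with source root. -/
abbrev DAGClass := Quot dagIsoRel

/-- The (right) pre-Lie identity for a bilinear map. -/
def IsPreLie {R M : Type*} [CommRing R] [AddCommGroup M] [Module R M]
    (t : M →ₗ[R] M →ₗ[R] M) : Prop :=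
  ∀ x y z : M, t (t x y) z - t x (t y z) = t (t x z) y - t x (t z y)

/-!
Both `(G₁ ⊲ G₂) ⊲ G₃` and `G₁ ⊲ (G₂ ⊲ G₃)` are sums of graphs in which `G₂` hangs at a vertex `v`
of `G₁` and `G₃` at a vertex of the result. In the first, `G₃` hangs either at a vertex of `G₁` or
at a non-root vertex of `G₂`; in the second, at any vertex of `G₂`, where the root of `G₂` means
the vertex `v` itself. The difference is therefore the sum over `v, w ∈ V(G₁)` of the graphs with
`G₂` at `v` and `G₃` at `w`, minus the diagonal `v = w`, and this is symmetric in `G₂` and `G₃`.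
-/

open Fin.NatCast Fin.CommRing in
theorem Fin.forall_of_add_one_closed {n : ℕ} {p : Fin (n + 1) → Prop}
    (hp : ∀ i, p i → p (i + 1)) {i : Fin (n + 1)} (hi : p i) (j : Fin (n + 1)) : p j := by
  have hk (k : ℕ) : p (i + k) := by
    induction k with
    | zero => simpa using hi
    | succ k ih => simpa [add_assoc] using hp _ ih
  simpa using hk (j - i).val

def Equiv.sumRightComm (α β γ : Type*) : (α ⊕ β) ⊕ γ ≃ (α ⊕ γ) ⊕ β where
  toFun
    | .inl (.inl a) => .inl (.inl a)
    | .inl (.inr b) => .inr b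
    | .inr c => .inl (.inr c)
  invFun
    | .inl (.inl a) => .inl (.inl a)
    | .inl (.inr c) => .inr c
    | .inr b => .inl (.inr b)
  left_inv := by rintro ((a | b) | c) <;> rfl
  right_inv := by rintro ((a | c) | b) <;> rfl

namespace RootedMultigraph

def glueInclRight (G₁ : RootedMultigraph) (v : G₁.V) (G₂ : RootedMultigraph) (w : G₂.V) :
    (G₁.glue v G₂).V :=
  if h : w = G₂.root then Sum.inl v else Sum.inr ⟨w, h⟩

variable {G₁ G₁' G₂ G₂' G₃ : RootedMultigraph}

@[simp] lemma glue_src_inl (v : G₁.V) (e : G₁.E) :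
    (G₁.glue v G₂).src (Sum.inl e) = Sum.inl (G₁.src e) := rfl

@[simp] lemma glue_src_inr (v : G₁.V) (e : G₂.E) :
    (G₁.glue v G₂).src (Sum.inr e) = G₁.glueInclRight v G₂ (G₂.src e) := rfl

@[simp] lemma glue_tgt_inr (v : G₁.V) (e : G₂.E) :
    (G₁.glue v G₂).tgt (Sum.inr e) = G₁.glueInclRight v G₂ (G₂.tgt e) := rfl

@[simp] lemma glueInclRight_root (v : G₁.V) : G₁.glueInclRight v G₂ G₂.root = Sum.inl v :=
  dif_pos rfl

lemma glueInclRight_of_ne (v : G₁.V) {w : G₂.V} (hw : w ≠ G₂.root) :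
    G₁.glueInclRight v G₂ w = Sum.inr ⟨w, hw⟩ :=
  dif_neg hw

lemma glueInclRight_injective (v : G₁.V) : Function.Injective (G₁.glueInclRight v G₂) := by
  intro w w' h
  by_cases hw : w = G₂.root <;> by_cases hw' : w' = G₂.root
  · exact hw.trans hw'.symm
  · rw [hw, glueInclRight_root, glueInclRight_of_ne v hw'] at h
    cases h
  · rw [hw', glueInclRight_root, glueInclRight_of_ne v hw] at h
    cases h
  · rw [glueInclRight_of_ne v hw, glueInclRight_of_ne v hw'] at h
    exact congrArg Subtype.val (Sum.inr_injective h)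

lemma glue_rootIsSource (h₁ : G₁.RootIsSource) (h₂ : G₂.RootIsSource) (v : G₁.V) :
    (G₁.glue v G₂).RootIsSource := by
  rintro (e | e) h
  · exact h₁ e (Sum.inl_injective h)
  · rw [glue_tgt_inr, glueInclRight_of_ne v (h₂ e)] at h
    cases h

/-- Once a cycle of `G₁ ⊲_v G₂` enters `G₂`, it cannot leave it again, because the root of
`G₂` is a source. -/
lemma glue_acyclic (h₁ : G₁.Acyclic) (h₂ : G₂.Good) (v : G₁.V) : (G₁.glue v G₂).Acyclic := by
  rintro ⟨n, e, he⟩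
  by_cases hright : ∃ i, (e i).isRight
  · obtain ⟨i₀, hi₀⟩ := hright
    have step (i) (hi : (e i).isRight) : (e (i + 1)).isRight := by
      obtain ⟨f, hf⟩ := Sum.isRight_iff.mp hi
      have h := he i
      rw [hf, glue_tgt_inr, glueInclRight_of_ne v (h₂.2 f)] at h
      cases hnext : e (i + 1) <;> simp_all
    choose f hf using fun i => Sum.isRight_iff.mp (Fin.forall_of_add_one_closed step hi₀ i)
    refine h₂.1 ⟨n, f, fun i => glueInclRight_injective v ?_⟩
    simpa [hf] using he i
  · push Not at hright
    choose f hf using fun i => Sum.isLeft_iff.mp (Sum.not_isRight.mp (hright i))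
    refine h₁ ⟨n, f, fun i => ?_⟩
    have h := he i
    rw [hf, hf] at h
    exact Sum.inl_injective h

lemma glue_good (h₁ : G₁.Good) (h₂ : G₂.Good) (v : G₁.V) : (G₁.glue v G₂).Good :=
  ⟨glue_acyclic h₁.1 h₂ v, glue_rootIsSource h₁.2 h₂.2 v⟩

lemma Iso.exists_glue_left (h : G₁.Iso G₁') (G₂ : RootedMultigraph) :
    ∃ eV : G₁.V ≃ G₁'.V, ∀ v, (G₁.glue v G₂).Iso (G₁'.glue (eV v) G₂) := by
  obtain ⟨eV, eE, hs, ht, hr⟩ := h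
  refine ⟨eV, fun v => ⟨eV.sumCongr (Equiv.refl _), eE.sumCongr (Equiv.refl _), ?_, ?_,
    congrArg Sum.inl hr⟩⟩ <;>
  · rintro (e | e) <;>
      dsimp only [glue, Sum.elim, Sum.map, Equiv.sumCongr, DFunLike.coe, EquivLike.coe] <;>
      (try split_ifs) <;> simp_all

lemma Iso.glue_right (h : G₂.Iso G₂') (v : G₁.V) : (G₁.glue v G₂).Iso (G₁.glue v G₂') := by
  obtain ⟨eV, eE, hs, ht, hr⟩ := h
  have hroot (w : G₂.V) : w ≠ G₂.root ↔ eV w ≠ G₂'.root := by rw [← hr, eV.apply_eq_iff_eq.ne]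
  refine ⟨(Equiv.refl _).sumCongr (eV.subtypeEquiv hroot), (Equiv.refl _).sumCongr eE, ?_, ?_,
    rfl⟩ <;>
  · rintro (e | e) <;>
      dsimp only [glue, Sum.elim, Sum.map, Equiv.sumCongr, Equiv.subtypeEquiv, DFunLike.coe,
        EquivLike.coe] <;>
      (try split_ifs) <;> simp_all [← hs, ← ht, ← hr]

lemma glue_glue_comm (v w : G₁.V) :
    ((G₁.glue v G₂).glue (Sum.inl w) G₃).Iso ((G₁.glue w G₃).glue (Sum.inl v) G₂) := by
  refine ⟨Equiv.sumRightComm _ _ _, Equiv.sumRightComm _ _ _, ?_, ?_, rfl⟩ <;>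
  · rintro ((e | e) | e) <;>
      dsimp only [glue, Sum.elim, Equiv.sumRightComm, DFunLike.coe, EquivLike.coe] <;>
      (try split_ifs) <;> rfl

lemma glue_glue_assoc (v : G₁.V) (w : G₂.V) :
    ((G₁.glue v G₂).glue (G₁.glueInclRight v G₂ w) G₃).Iso (G₁.glue v (G₂.glue w G₃)) := by
  refine ⟨⟨fun x => match x with
      | .inl (.inl a) => .inl a
      | .inl (.inr b) => .inr ⟨.inl b.1, by simp [glue, b.2]⟩
      | .inr c => .inr ⟨.inr c, by simp [glue]⟩,
    fun x => match x with
      | .inl a => .inl (.inl a)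
      | .inr ⟨.inl b, h⟩ => .inl (.inr ⟨b, by simpa [glue] using h⟩)
      | .inr ⟨.inr c, _⟩ => .inr c,
    by rintro ((a | b) | c) <;> rfl, by rintro (a | ⟨b | c, h⟩) <;> rfl⟩,
    Equiv.sumAssoc _ _ _, ?_, ?_, rfl⟩ <;>
  · rintro ((e | e) | e) <;>
      dsimp only [glue, glueInclRight, Sum.elim, Equiv.sumAssoc, DFunLike.coe, EquivLike.coe] <;>
      split_ifs <;> simp_all

end RootedMultigraph

theorem isPreLie_of_single {R α : Type*} [CommRing R]
    {t : (α →₀ R) →ₗ[R] (α →₀ R) →ₗ[R] (α →₀ R)}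
    (h : ∀ a b c : α,
      t (t (Finsupp.single a 1) (Finsupp.single b 1)) (Finsupp.single c 1)
          - t (Finsupp.single a 1) (t (Finsupp.single b 1) (Finsupp.single c 1))
        = t (t (Finsupp.single a 1) (Finsupp.single c 1)) (Finsupp.single b 1)
          - t (Finsupp.single a 1) (t (Finsupp.single c 1) (Finsupp.single b 1))) :
    IsPreLie t := by
  set A := t.compr₂ t
  set B := ((LinearMap.llcomp R _ _ _).comp t).compl₂ t
  -- phrased without subtraction: instance search finds no `AddCommGroup` on these hom spaces
  have hAB : A + LinearMap.lflip.comp B = LinearMap.lflip.comp A + B := by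
    ext a b c : 6
    simpa [A, B, sub_eq_sub_iff_add_eq_add] using h a b c
  intro x y z
  simpa [A, B, sub_eq_sub_iff_add_eq_add] using congr($hAB x y z)

namespace RootedDAG

open RootedMultigraph

def glue (G₁ : RootedDAG) (v : G₁.1.V) (G₂ : RootedDAG) : RootedDAG :=
  ⟨G₁.1.glue v G₂.1, glue_good G₁.2 G₂.2 v⟩

lemma sum_glue_V {M : Type*} [AddCommMonoid M] (G₁ : RootedDAG) (v : G₁.1.V) (G₂ : RootedDAG)
    (f : (G₁.glue v G₂).1.V → M) :
    ∑ u, f u = ∑ x, f (Sum.inl x) + ∑ y : {w : G₂.1.V // w ≠ G₂.1.root}, f (Sum.inr y) :=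
  Fintype.sum_sum_type f

variable (R : Type*) [CommRing R]

def single (G : RootedDAG) : DAGClass →₀ R := Finsupp.single (Quot.mk dagIsoRel G) 1

def insertion (G₁ G₂ : RootedDAG) : DAGClass →₀ R := ∑ v, single R (G₁.glue v G₂)

variable {R}

lemma single_eq_of_iso {G G' : RootedDAG} (h : G.1.Iso G'.1) : single R G = single R G' :=
  congrArg (Finsupp.single · 1) (Quot.sound h)

lemma insertion_congr_left {G₁ G₁' : RootedDAG} (h : G₁.1.Iso G₁'.1) (G₂ : RootedDAG) :
    insertion R G₁ G₂ = insertion R G₁' G₂ := by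
  obtain ⟨eV, hglue⟩ := h.exists_glue_left G₂.1
  exact Fintype.sum_equiv eV _ _ fun v => single_eq_of_iso (hglue v)

lemma insertion_congr_right (G₁ : RootedDAG) {G₂ G₂' : RootedDAG} (h : G₂.1.Iso G₂'.1) :
    insertion R G₁ G₂ = insertion R G₁ G₂' :=
  Fintype.sum_congr _ _ fun v => single_eq_of_iso (h.glue_right v)

end RootedDAG

namespace DAGClass

variable (R : Type*) [CommRing R]

def insertion : DAGClass → DAGClass → DAGClass →₀ R :=
  Quot.lift₂ (RootedDAG.insertion R) (fun G₁ _ _ h => RootedDAG.insertion_congr_right G₁ h)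
    (fun _ _ G₂ h => RootedDAG.insertion_congr_left h G₂)

def insertionMap : (DAGClass →₀ R) →ₗ[R] (DAGClass →₀ R) →ₗ[R] (DAGClass →₀ R) :=
  Finsupp.linearCombination R fun a => Finsupp.linearCombination R (insertion R a)

end DAGClass

namespace RootedDAG

open RootedMultigraph DAGClass

variable {R : Type*} [CommRing R]

lemma insertionMap_single_single (G₁ G₂ : RootedDAG) :
    insertionMap R (single R G₁) (single R G₂) = insertion R G₁ G₂ := by
  simp [insertionMap, single, DAGClass.insertion]

lemma insertionMap_insertion_single (G₁ G₂ G₃ : RootedDAG) :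
    insertionMap R (insertion R G₁ G₂) (single R G₃)
      = ∑ v, ∑ u, single R ((G₁.glue v G₂).glue u G₃) := by
  simp only [insertion, map_sum, LinearMap.sum_apply, insertionMap_single_single]

lemma insertionMap_single_insertion (G₁ G₂ G₃ : RootedDAG) :
    insertionMap R (single R G₁) (insertion R G₂ G₃)
      = ∑ v, ∑ w, single R (G₁.glue v (G₂.glue w G₃)) := by
  simp only [insertion, map_sum, insertionMap_single_single]
  exact Finset.sum_comm

lemma single_glue_glue_glueInclRight (G₁ G₂ G₃ : RootedDAG) (v : G₁.1.V) (w : G₂.1.V) :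
    single R ((G₁.glue v G₂).glue (G₁.1.glueInclRight v G₂.1 w) G₃)
      = single R (G₁.glue v (G₂.glue w G₃)) :=
  single_eq_of_iso (glue_glue_assoc v w)

lemma associator_single (G₁ G₂ G₃ : RootedDAG) :
    insertionMap R (insertionMap R (single R G₁) (single R G₂)) (single R G₃)
        - insertionMap R (single R G₁) (insertionMap R (single R G₂) (single R G₃))
      = ∑ v, ∑ w, single R ((G₁.glue v G₂).glue (Sum.inl w) G₃)
        - ∑ v, single R ((G₁.glue v G₂).glue (Sum.inl v) G₃) := by
  rw [insertionMap_single_single, insertionMap_insertion_single, insertionMap_single_single,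
    insertionMap_single_insertion, ← Finset.sum_sub_distrib, ← Finset.sum_sub_distrib]
  refine Fintype.sum_congr _ _ fun v => ?_
  have hsplit : ∑ w, single R (G₁.glue v (G₂.glue w G₃))
      = single R ((G₁.glue v G₂).glue (Sum.inl v) G₃)
        + ∑ y : {w // w ≠ G₂.1.root}, single R ((G₁.glue v G₂).glue (Sum.inr y) G₃) := by
    simp only [← single_glue_glue_glueInclRight]
    rw [Fintype.sum_eq_add_sum_subtype_ne _ G₂.1.root, glueInclRight_root]
    congr! with y
    rw [glueInclRight_of_ne v y.2]
  rw [sum_glue_V, hsplit]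
  abel

lemma insertionMap_preLie_single (G₁ G₂ G₃ : RootedDAG) :
    insertionMap R (insertionMap R (single R G₁) (single R G₂)) (single R G₃)
        - insertionMap R (single R G₁) (insertionMap R (single R G₂) (single R G₃))
      = insertionMap R (insertionMap R (single R G₁) (single R G₃)) (single R G₂)
        - insertionMap R (single R G₁) (insertionMap R (single R G₃) (single R G₂)) := by
  have hcomm (v w : G₁.1.V) : single R ((G₁.glue v G₂).glue (Sum.inl w) G₃)
      = single R ((G₁.glue w G₃).glue (Sum.inl v) G₂) :=
    single_eq_of_iso (glue_glue_comm v w)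
  rw [associator_single, associator_single, Finset.sum_comm]
  simp only [hcomm]

end RootedDAG

/-- on the free `R`-module spanned by isomorphism classes of finite rooted
directed acyclic multigraphs with source root, the bilinear operator
`G₁ ⊲ G₂ = Σ_{v ∈ V(G₁)} [G₁ ⊲_v G₂]` is well defined and satisfies the right pre-Lie
identity. -/
theorem insertion_of_rooted_dags_is_preLie (R : Type) [CommRing R] :
    ∃ ins : (DAGClass →₀ R) →ₗ[R] (DAGClass →₀ R) →ₗ[R] (DAGClass →₀ R),
      (∀ G₁ G₂ : RootedDAG,
        ∃ h : ∀ v : G₁.1.V, (G₁.1.glue v G₂.1).Good,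
          ins (Finsupp.single (Quot.mk dagIsoRel G₁) 1)
              (Finsupp.single (Quot.mk dagIsoRel G₂) 1)
            = ∑ v : G₁.1.V,
                Finsupp.single
                  (Quot.mk dagIsoRel (⟨G₁.1.glue v G₂.1, h v⟩ : RootedDAG)) (1 : R)) ∧
      IsPreLie ins := by
  refine ⟨DAGClass.insertionMap R,
    fun G₁ G₂ => ⟨fun v => (G₁.glue v G₂).2, RootedDAG.insertionMap_single_single G₁ G₂⟩,
    isPreLie_of_single fun a b c => ?_⟩
  induction a using Quot.ind
  induction b using Quot.ind
  induction c using Quot.ind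
  exact RootedDAG.insertionMap_preLie_single _ _ _
end
end

section
/- Fix an integer k ≥ 3. Call a graph in the half-edge formalism a φ^k-graph if it is finite, connected, and every vertex has valence exactly k. Let L be the smallest set of isomorphism classes of graphs in the half-edge formalism such that: (i) the k-corolla (a single vertex with k external half-edges) belongs to L; (ii) if G ∈ L and f ≠ f' are two external half-edges of G, then the graph obtained from G by modifying the involution so that it exchanges f and f' (joining them into an internal edge) belongs to L; (iii) if G ∈ L and f is an external half-edge of G, then the graph obtained by taking the disjoint union of G with a k-corolla and joining f to one half-edge of the corolla belongs to L. Then L is exactly the set of isomorphism classes of φ^k-graphs. -/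
open scoped Classical

noncomputable section

/-- A finite graph in the half-edge formalism. -/
structure HalfEdgeGraph : Type 1 where
  V : Type
  F : Type
  [fintV : Fintype V]
  [fintF : Fintype F]
  att : F → V
  inv : F → F

attribute [instance] HalfEdgeGraph.fintV HalfEdgeGraph.fintF

namespace HalfEdgeGraph

/-- Isomorphism of half-edge graphs. -/
def Iso (G G' : HalfEdgeGraph) : Prop :=
  ∃ (eV : G.V ≃ G'.V) (eF : G.F ≃ G'.F),
    (∀ f, eV (G.att f) = G'.att (eF f)) ∧ (∀ f, eF (G.inv f) = G'.inv (eF f))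

/-- Adjacency through an internal edge. -/
def Adj (G : HalfEdgeGraph) (u v : G.V) : Prop :=
  ∃ f, G.inv f ≠ f ∧ G.att f = u ∧ G.att (G.inv f) = v

/-- Connectedness. -/
def Connected (G : HalfEdgeGraph) : Prop :=
  Nonempty G.V ∧ ∀ u v : G.V, Relation.ReflTransGen G.Adj u v

/-- The valence of a vertex: the number of half-edges attached to it. -/
def valence (G : HalfEdgeGraph) (v : G.V) : ℕ := Fintype.card {f : G.F // G.att f = v}

end HalfEdgeGraph

/-- The `k`-corolla: a single vertex with `k` external half-edges. -/
def corolla (k : ℕ) : HalfEdgeGraph where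
  V := PUnit
  F := Fin k
  att := fun _ => PUnit.unit
  inv := id

/-- Join two external half-edges `f ≠ f'` of `G` into an internal edge. -/
def joinExt (G : HalfEdgeGraph) (f f' : G.F) : HalfEdgeGraph where
  V := G.V
  F := G.F
  att := G.att
  inv := fun g => if g = f then f' else if g = f' then f else G.inv g

/-- Disjoint union of `G` with a `k`-corolla, joining the half-edge `f` of `G` to the
half-edge `i` of the corolla. -/
def attachCorolla (G : HalfEdgeGraph) (f : G.F) (k : ℕ) (i : Fin k) : HalfEdgeGraph where
  V := G.V ⊕ PUnit
  F := G.F ⊕ Fin k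
  att := Sum.elim (fun g => Sum.inl (G.att g)) (fun _ => Sum.inr PUnit.unit)
  inv := Sum.elim
    (fun g => if g = f then Sum.inr i else Sum.inl (G.inv g))
    (fun j => if j = i then Sum.inl f else Sum.inr j)

/-- The smallest (isomorphism-invariant) class of half-edge graphs containing the
`k`-corolla and closed under joining two external half-edges and under attaching a
fresh `k`-corolla along an external half-edge. -/
inductive InLang (k : ℕ) : HalfEdgeGraph → Prop
  | corolla : InLang k (corolla k)
  | join {G : HalfEdgeGraph} (hG : InLang k G) (f f' : G.F)
      (hf : G.inv f = f) (hf' : G.inv f' = f') (hne : f ≠ f') :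
      InLang k (joinExt G f f')
  | attach {G : HalfEdgeGraph} (hG : InLang k G) (f : G.F) (hf : G.inv f = f)
      (i : Fin k) : InLang k (attachCorolla G f k i)
  | iso {G G' : HalfEdgeGraph} (hG : InLang k G) (h : G.Iso G') : InLang k G'

/-- A `φ^k`-graph: a finite connected half-edge graph (with genuine involution) all of
whose vertices have valence exactly `k`. -/
def IsPhiKGraph (k : ℕ) (G : HalfEdgeGraph) : Prop :=
  Function.Involutive G.inv ∧ G.Connected ∧ ∀ v : G.V, G.valence v = k

/-! Each production rule visibly preserves involutivity, connectedness and valences, and so does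
isomorphism; this gives one inclusion. For the other, induct on the number of vertices. A
one-vertex φ^k-graph is the corolla with some pairs of half-edges joined into loops. Otherwise
pick a vertex `v` whose removal keeps the graph connected (a leaf of a spanning tree). Deleting
`v` with its half-edges, and leaving external the half-edges that were paired with them, gives
a smaller φ^k-graph. The original graph is recovered from it by attaching a corolla along one
edge that ran into `v` and then joining the remaining pairs of external half-edges. -/

namespace HalfEdgeGraph

open Relation Function

variable {G : HalfEdgeGraph}

theorem adj_symm (hG : Involutive G.inv) {u w : G.V} : G.Adj u w → G.Adj w u := by
  rintro ⟨f, hf, rfl, rfl⟩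
  exact ⟨G.inv f, by rwa [hG, ne_comm], rfl, by rw [hG]⟩

theorem reflTransGen_adj_symm (hG : Involutive G.inv) {u w : G.V}
    (h : ReflTransGen G.Adj u w) : ReflTransGen G.Adj w u :=
  have : Std.Symm G.Adj := ⟨fun _ _ => adj_symm hG⟩
  symm h

theorem connected_of_forall_reflTransGen (hG : Involutive G.inv) (r : G.V)
    (h : ∀ u, ReflTransGen G.Adj u r) : G.Connected :=
  ⟨⟨r⟩, fun u w => (h u).trans (reflTransGen_adj_symm hG (h w))⟩

def toSimpleGraph (G : HalfEdgeGraph) : SimpleGraph G.V := SimpleGraph.fromRel G.Adj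

theorem Connected.toSimpleGraph (hG : G.Connected) : G.toSimpleGraph.Connected := by
  refine (SimpleGraph.connected_iff _).2 ⟨fun u w => ?_, hG.1⟩
  induction hG.2 u w with
  | refl => rfl
  | @tail a b _ hab ih =>
    refine ih.trans ?_
    by_cases h : a = b
    · rw [h]
    · exact SimpleGraph.Adj.reachable ((SimpleGraph.fromRel_adj _ _ _).2 ⟨h, .inl hab⟩)

theorem connected_of_toSimpleGraph (hG : Involutive G.inv) (h : G.toSimpleGraph.Connected) :
    G.Connected := by
  refine ⟨h.nonempty, fun u w => ReflTransGen.mono ?_ _ _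
    ((SimpleGraph.reachable_iff_reflTransGen _ _).1 (h.preconnected u w))⟩
  rintro a b ⟨-, hab | hba⟩
  exacts [hab, adj_symm hG hba]

theorem Connected.exists_edge_into [Nontrivial G.V] (hconn : G.Connected)
    (hG : Involutive G.inv) (v : G.V) : ∃ f, G.att f ≠ v ∧ G.att (G.inv f) = v := by
  obtain ⟨u, hvu, hadj⟩ := hconn.toSimpleGraph.preconnected.exists_adj_of_nontrivial v
  obtain ⟨f, -, rfl, rfl⟩ := hadj.elim (adj_symm hG) id
  exact ⟨f, hvu.symm, rfl⟩

section joinExt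

variable {f f' g : G.F}

theorem joinExt_inv_left : (joinExt G f f').inv f = f' := if_pos rfl

theorem joinExt_inv_right (hne : f ≠ f') : (joinExt G f f').inv f' = f := by
  simp [joinExt, hne.symm]

theorem joinExt_inv_of_ne (hf : g ≠ f) (hf' : g ≠ f') : (joinExt G f f').inv g = G.inv g := by
  simp [joinExt, hf, hf']

end joinExt

section attachCorolla

variable {k : ℕ} {f g : G.F} {i j : Fin k}

theorem attachCorolla_inv_inl_self : (attachCorolla G f k i).inv (.inl f) = .inr i := if_pos rfl

theorem attachCorolla_inv_inl_of_ne (h : g ≠ f) :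
    (attachCorolla G f k i).inv (.inl g) = .inl (G.inv g) := if_neg h

theorem attachCorolla_inv_inr_self : (attachCorolla G f k i).inv (.inr i) = .inl f := if_pos rfl

theorem attachCorolla_inv_inr_of_ne (h : j ≠ i) :
    (attachCorolla G f k i).inv (.inr j) = .inr j := if_neg h

end attachCorolla

def withInv (G : HalfEdgeGraph) (σ : G.F → G.F) : HalfEdgeGraph := { G with inv := σ }

def deleteVertex (G : HalfEdgeGraph) (v : G.V) : HalfEdgeGraph where
  V := ({v}ᶜ : Set G.V)
  F := {f : G.F // G.att f ≠ v}
  att f := ⟨G.att f, f.2⟩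
  inv f := if h : G.att (G.inv f) = v then f else ⟨G.inv f, h⟩

theorem adj_deleteVertex {v : G.V} {a b : ({v}ᶜ : Set G.V)} (h : G.Adj a b) :
    (G.deleteVertex v).Adj a b := by
  obtain ⟨f, hf, hfa, hfb⟩ := h
  have hinv : G.att (G.inv f) ≠ v := hfb ▸ b.2
  have hD : (G.deleteVertex v).inv ⟨f, hfa ▸ a.2⟩ = ⟨G.inv f, hinv⟩ := dif_neg hinv
  exact ⟨⟨f, hfa ▸ a.2⟩, by rw [hD]; exact fun h => hf (congrArg Subtype.val h),
    Subtype.ext hfa, by rw [hD]; exact Subtype.ext hfb⟩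

end HalfEdgeGraph

section

open HalfEdgeGraph Relation Function Finset

variable {k : ℕ} {G H : HalfEdgeGraph}

theorem HalfEdgeGraph.Iso.isPhiKGraph (e : G.Iso H) (hG : IsPhiKGraph k G) :
    IsPhiKGraph k H := by
  obtain ⟨eV, eF, hatt, hinv⟩ := e
  obtain ⟨hGinv, ⟨⟨v₀⟩, hconn⟩, hval⟩ := hG
  have hinv' : ∀ f, H.inv f = eF (G.inv (eF.symm f)) := fun f => by
    rw [hinv, Equiv.apply_symm_apply]
  have hadj : ∀ u w, G.Adj u w → H.Adj (eV u) (eV w) := by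
    rintro _ _ ⟨f, hf, rfl, rfl⟩
    exact ⟨eF f, by rwa [← hinv, eF.injective.ne_iff], (hatt f).symm, by rw [hatt, hinv]⟩
  refine ⟨fun f => by simp [hinv', hGinv _], ⟨⟨eV v₀⟩, fun u w => ?_⟩, fun v => ?_⟩
  · simpa [onFun] using (hconn (eV.symm u) (eV.symm w)).lift eV hadj
  · rw [← hval (eV.symm v)]
    refine Fintype.card_congr (eF.subtypeEquiv fun f => ?_).symm
    rw [← hatt, eV.eq_symm_apply]

theorem isPhiKGraph_corolla : IsPhiKGraph k (corolla k) :=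
  ⟨fun _ => rfl, ⟨⟨PUnit.unit⟩, fun _ _ => .refl⟩, fun _ =>
    (Fintype.card_congr (Equiv.subtypeUnivEquiv fun _ => rfl)).trans (Fintype.card_fin k)⟩

theorem IsPhiKGraph.join (hG : IsPhiKGraph k G) {f f' : G.F} (hf : G.inv f = f)
    (hf' : G.inv f' = f') (hne : f ≠ f') : IsPhiKGraph k (joinExt G f f') := by
  obtain ⟨hGinv, ⟨hV, hconn⟩, hval⟩ := hG
  have hinv : ∀ g, (joinExt G f f').inv g =
      if g = f then f' else if g = f' then f else G.inv g := fun _ => rfl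
  refine ⟨fun g => ?_, ⟨hV, fun u w => ReflTransGen.mono ?_ _ _ (hconn u w)⟩, hval⟩
  · have := hGinv g
    grind
  · rintro _ _ ⟨g, hg, rfl, rfl⟩
    have hgf : g ≠ f := fun h => hg (h ▸ hf)
    have hgf' : g ≠ f' := fun h => hg (h ▸ hf')
    rw [← joinExt_inv_of_ne hgf hgf'] at hg ⊢
    exact ⟨g, hg, rfl, rfl⟩

theorem IsPhiKGraph.attach (hG : IsPhiKGraph k G) {f : G.F} (hf : G.inv f = f) (i : Fin k) :
    IsPhiKGraph k (attachCorolla G f k i) := by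
  obtain ⟨hGinv, ⟨-, hconn⟩, hval⟩ := hG
  set A := attachCorolla G f k i
  have hinvl : ∀ g, A.inv (.inl g) = if g = f then .inr i else .inl (G.inv g) := fun _ => rfl
  have hinvr : ∀ j, A.inv (.inr j) = if j = i then .inl f else .inr j := fun _ => rfl
  have hAinv : Involutive A.inv := by
    rintro (g | j)
    · have := hGinv g
      grind
    · grind
  have hadj : ∀ u w, G.Adj u w → A.Adj (.inl u) (.inl w) := by
    rintro _ _ ⟨g, hg, rfl, rfl⟩
    have hgf : g ≠ f := by rintro rfl; exact hg hf
    exact ⟨.inl g, by rw [attachCorolla_inv_inl_of_ne hgf]; exact Sum.inl_injective.ne hg, rfl,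
      by rw [attachCorolla_inv_inl_of_ne hgf]; rfl⟩
  have hbridge : A.Adj (.inl (G.att f)) (.inr PUnit.unit) :=
    ⟨.inl f, by rw [attachCorolla_inv_inl_self]; exact Sum.inr_ne_inl, rfl,
      by rw [attachCorolla_inv_inl_self]; rfl⟩
  refine ⟨hAinv, connected_of_forall_reflTransGen hAinv (.inr PUnit.unit) ?_, ?_⟩
  · rintro (u | ⟨⟩)
    · exact (ReflTransGen.lift _ hadj _ _ (hconn u (G.att f))).tail hbridge
    · exact .refl
  · rintro (v | ⟨⟩)
    · exact (Fintype.card_congr Equiv.subtypeSum).trans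
        (by simp [A, attachCorolla, ← hval v, valence])
    · exact (Fintype.card_congr Equiv.subtypeSum).trans (by simp [A, attachCorolla])

theorem InLang.isPhiKGraph (h : InLang k G) : IsPhiKGraph k G := by
  induction h with
  | corolla => exact isPhiKGraph_corolla
  | join _ f f' hf hf' hne ih => exact IsPhiKGraph.join ih hf hf' hne
  | attach _ f hf i ih => exact IsPhiKGraph.attach ih hf i
  | iso _ e ih => exact e.isPhiKGraph ih

theorem InLang.withInv (hH : InLang k H) {σ : H.F → H.F} (hσ : Involutive σ)
    (hagree : ∀ g, H.inv g ≠ g → σ g = H.inv g) : InLang k (H.withInv σ) := by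
  induction hn : #{g | σ g ≠ H.inv g} using Nat.strong_induction_on generalizing H with
  | _ n ih =>
  by_cases hall : ∀ g, σ g = H.inv g
  · exact hH.iso ⟨.refl _, .refl _, fun _ => rfl, fun g => (hall g).symm⟩
  obtain ⟨g, hg⟩ := not_forall.1 hall
  have hHinv := hH.isPhiKGraph.1
  have hgext : H.inv g = g := by_contra (hg ∘ hagree g)
  have hσgext : H.inv (σ g) = σ g := by
    by_contra hint
    have h1 : g = H.inv (σ g) := (hσ g).symm.trans (hagree _ hint)
    exact hg ((congrArg H.inv h1).trans (hHinv _)).symm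
  have hne : g ≠ σ g := fun h => hg (by rw [hgext, ← h])
  have hJ : ∀ x, x ≠ g → x ≠ σ g → (joinExt H g (σ g)).inv x = H.inv x :=
    fun _ => joinExt_inv_of_ne
  have hfewer : #{x | σ x ≠ (joinExt H g (σ g)).inv x} < n := by
    rw [← hn]
    refine card_lt_card ⟨fun x hx => ?_, not_subset.2 ⟨g, by simpa using hg, ?_⟩⟩
    · simp only [mem_filter, mem_univ, true_and] at hx ⊢
      by_cases hxg : x = g
      · subst hxg; exact absurd joinExt_inv_left.symm hx
      by_cases hxσg : x = σ g
      · rw [hxσg] at hx; exact absurd ((hσ g).trans (joinExt_inv_right hne).symm) hx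
      rwa [← hJ x hxg hxσg]
    · simp [joinExt_inv_left]
  refine ih _ hfewer (hH.join g (σ g) hgext hσgext hne) hσ (fun x hx => ?_) rfl
  by_cases hxg : x = g
  · rw [hxg]; exact joinExt_inv_left.symm
  by_cases hxσg : x = σ g
  · rw [hxσg, joinExt_inv_right hne, hσ]
  rw [hJ x hxg hxσg] at hx ⊢
  exact hagree x hx

theorem InLang.of_equiv_preserving_internal (hH : InLang k H) (hG : Involutive G.inv)
    (eV : H.V ≃ G.V) (eF : H.F ≃ G.F) (hatt : ∀ f, eV (H.att f) = G.att (eF f))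
    (hinv : ∀ f, H.inv f ≠ f → eF (H.inv f) = G.inv (eF f)) : InLang k G := by
  have hσ : InLang k (H.withInv (eF.symm ∘ G.inv ∘ eF)) :=
    hH.withInv (fun f => by simp [hG _]) (fun f hf => by simp [← hinv f hf])
  exact hσ.iso ⟨eV, eF, hatt, fun f => eF.apply_symm_apply (G.inv (eF f))⟩

theorem IsPhiKGraph.inLang_of_subsingleton [Subsingleton G.V] (hG : IsPhiKGraph k G) :
    InLang k G := by
  obtain ⟨hGinv, ⟨hV, -⟩, hval⟩ := hG
  obtain ⟨v₀⟩ := id hV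
  have hcard : Fintype.card G.F = k :=
    (Fintype.card_congr (Equiv.subtypeUnivEquiv fun _ => Subsingleton.elim _ _)).symm.trans
      (hval v₀)
  exact InLang.corolla.of_equiv_preserving_internal hGinv
    Equiv.punitOfNonemptyOfSubsingleton.symm (Fintype.equivFinOfCardEq hcard).symm
    (fun _ => Subsingleton.elim _ _) (fun _ hf => absurd rfl hf)

theorem isPhiKGraph_deleteVertex (hGinv : Involutive G.inv) (hval : ∀ u, G.valence u = k)
    {v : G.V} (hv : (G.toSimpleGraph.induce {v}ᶜ).Connected) :
    IsPhiKGraph k (G.deleteVertex v) := by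
  have hDinv : Involutive (G.deleteVertex v).inv := by
    rintro ⟨f, hf⟩
    by_cases h : G.att (G.inv f) = v
    · simp [deleteVertex, h]
    · simp [deleteVertex, h, hGinv f, hf]
  refine ⟨hDinv, connected_of_toSimpleGraph hDinv (hv.mono ?_), fun u => ?_⟩
  · rintro a b ⟨hab, h | h⟩
    · exact ⟨ne_of_apply_ne _ hab, .inl (adj_deleteVertex h)⟩
    · exact ⟨ne_of_apply_ne _ hab, .inr (adj_deleteVertex h)⟩
  · rw [← hval u.1]
    exact Fintype.card_congr ((Equiv.subtypeEquivRight fun _ => Subtype.ext_iff).trans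
      (Equiv.subtypeSubtypeEquivSubtype (p := (G.att · ≠ v)) (q := (G.att · = u.1))
        fun h => h ▸ u.2))

theorem inLang_of_inLang_deleteVertex (hGinv : Involutive G.inv) (hval : ∀ u, G.valence u = k)
    {v : G.V} {f : G.F} (hfv : G.att f ≠ v) (hf : G.att (G.inv f) = v)
    (hD : InLang k (G.deleteVertex v)) : InLang k G := by
  let f₀ : (G.deleteVertex v).F := ⟨f, hfv⟩
  have hf₀ : (G.deleteVertex v).inv f₀ = f₀ := dif_pos hf
  let e₀ : Fin k ≃ {g // G.att g = v} := (Fintype.equivFinOfCardEq (hval v)).symm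
  let i := e₀.symm ⟨G.inv f, hf⟩
  let eV : (attachCorolla (G.deleteVertex v) f₀ k i).V ≃ G.V :=
    (Equiv.optionEquivSumPUnit _).symm.trans (Equiv.optionSubtypeNe v)
  let eF : (attachCorolla (G.deleteVertex v) f₀ k i).F ≃ G.F :=
    (Equiv.sumCongr (.refl _) e₀).trans ((Equiv.sumComm _ _).trans (Equiv.sumCompl _))
  have heFl : ∀ g, eF (.inl g) = g.1 := fun _ => rfl
  have heFr : ∀ j, eF (.inr j) = (e₀ j).1 := fun _ => rfl
  refine (hD.attach f₀ hf₀ i).of_equiv_preserving_internal hGinv eV eF ?_ ?_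
  · rintro (g | j)
    · rfl
    · exact (e₀ j).2.symm
  · rintro (g | j) hint
    · by_cases hg : g = f₀
      · rw [hg, attachCorolla_inv_inl_self, heFr, heFl, e₀.apply_symm_apply]
      · rw [attachCorolla_inv_inl_of_ne hg] at hint ⊢
        have hg' : G.att (G.inv g.1) ≠ v := fun h => hint (congrArg Sum.inl (dif_pos h))
        rw [heFl, heFl, show (G.deleteVertex v).inv g = ⟨G.inv g.1, hg'⟩ from dif_neg hg']
    · by_cases hj : j = i
      · rw [hj, attachCorolla_inv_inr_self, heFr, heFl, e₀.apply_symm_apply, hGinv]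
      · exact absurd (attachCorolla_inv_inr_of_ne hj) hint

theorem IsPhiKGraph.inLang {G : HalfEdgeGraph} (hG : IsPhiKGraph k G) : InLang k G := by
  rcases subsingleton_or_nontrivial G.V with hV | hV
  · exact hG.inLang_of_subsingleton
  obtain ⟨hGinv, hconn, hval⟩ := hG
  obtain ⟨v, hv⟩ :=
    hconn.toSimpleGraph.exists_connected_induce_compl_singleton_of_finite_nontrivial
  obtain ⟨f, hfv, hf⟩ := hconn.exists_edge_into hGinv v
  exact inLang_of_inLang_deleteVertex hGinv hval hfv hf
    (isPhiKGraph_deleteVertex hGinv hval hv).inLang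
termination_by Fintype.card G.V
decreasing_by exact Fintype.card_subtype_lt (x := v) (by simp)

end

theorem phiK_graph_language_general (k : ℕ) :
    ∀ G : HalfEdgeGraph, InLang k G ↔ IsPhiKGraph k G :=
  fun _ => ⟨InLang.isPhiKGraph, IsPhiKGraph.inLang⟩

/-- the graph language generated by the `k`-corolla under the two
production rules is exactly the set of `φ^k`-Feynman graphs. -/
theorem phiK_graph_language (k : ℕ) (hk : 3 ≤ k) :
    ∀ G : HalfEdgeGraph, InLang k G ↔ IsPhiKGraph k G :=
  phiK_graph_language_general k
end
end

section
/- Let R be a commutative ring and B a type. Suppose given: for each a ∈ B a finite set I(a) (of insertion positions); for each a ∈ B, i ∈ I(a), b ∈ B an element a ⊲ᵢ b ∈ B; and injections α_{a,i,b} : I(a) → I(a ⊲ᵢ b) and β_{a,i,b} : I(b) → I(a ⊲ᵢ b) whose images are disjoint and whose images together cover I(a ⊲ᵢ b). Assume for all a, b, c ∈ B and i ∈ I(a): (1) for every j ∈ I(b), (a ⊲ᵢ b) ⊲_{β_{a,i,b}(j)} c = a ⊲ᵢ (b ⊲ⱼ c); (2) for every j ∈ I(a), (a ⊲ᵢ b)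 ⊲_{α_{a,i,b}(j)} c = (a ⊲ⱼ c) ⊲_{α_{a,j,c}(i)} b. Then the bilinear extension to the free R-module on B of the operation a ⊲ b := Σ_{i ∈ I(a)} (a ⊲ᵢ b) satisfies the right pre-Lie identity. -/
open Function

theorem Fintype.sum_eq_sum_comp_add_sum_comp {X Y Z N : Type*} [Fintype X] [Fintype Y]
    [Fintype Z] [AddCommMonoid N] {f : X → Z} {g : Y → Z} (hf : Injective f) (hg : Injective g)
    (hdisj : ∀ x y, f x ≠ g y) (hcover : ∀ z, (∃ x, f x = z) ∨ ∃ y, g y = z) (F : Z → N) :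
    ∑ z, F z = ∑ x, F (f x) + ∑ y, F (g y) := by
  have hbij : Bijective (Sum.elim f g) := by
    refine ⟨hf.sumElim hg hdisj, fun z => ?_⟩
    rcases hcover z with ⟨x, rfl⟩ | ⟨y, rfl⟩
    exacts [⟨.inl x, rfl⟩, ⟨.inr y, rfl⟩]
  rw [← Fintype.sum_bijective _ hbij _ F fun _ => rfl, Fintype.sum_sum_type]
  rfl

namespace LinearMap

variable {R M : Type*} [CommRing R] [AddCommGroup M] [Module R M]

def bilinAssociator (t : M →ₗ[R] M →ₗ[R] M) : M →ₗ[R] M →ₗ[R] M →ₗ[R] M :=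
  t.compr₂ t - (llcomp R M M M ∘ₗ t).compl₂ t

@[simp]
theorem bilinAssociator_apply (t : M →ₗ[R] M →ₗ[R] M) (x y z : M) :
    bilinAssociator t x y z = t (t x y) z - t x (t y z) := rfl

theorem isPreLie_of_basis {ι : Type*} (b : Module.Basis ι R M) (t : M →ₗ[R] M →ₗ[R] M)
    (h : ∀ i j k, bilinAssociator t (b i) (b j) (b k) = bilinAssociator t (b i) (b k) (b j)) :
    IsPreLie t := by
  have hflip : bilinAssociator t = lflip.toLinearMap ∘ₗ bilinAssociator t :=
    b.ext fun i => ext_basis b b fun j k => by simpa using h i j k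
  intro x y z
  simpa using congr($hflip x y z)

end LinearMap

open Finsupp

section InsertionSystem

variable (R : Type*) [CommRing R] {B : Type*} {I : B → Type*} [∀ a, Fintype (I a)]

noncomputable def insertionProduct (ins : ∀ a, I a → B → B) :
    (B →₀ R) →ₗ[R] (B →₀ R) →ₗ[R] (B →₀ R) :=
  linearCombination R fun a => linearCombination R fun b => ∑ i : I a, single (ins a i b) (1 : R)

variable {R}

@[simp]
theorem insertionProduct_single_single (ins : ∀ a, I a → B → B) (a b : B) :
    insertionProduct R ins (single a 1) (single b 1) = ∑ i : I a, single (ins a i b) (1 : R) := by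
  simp [insertionProduct]

theorem insertionProduct_single_insertionProduct (ins : ∀ a, I a → B → B) (a b c : B) :
    insertionProduct R ins (single a 1) (insertionProduct R ins (single b 1) (single c 1)) =
      ∑ i : I a, ∑ j : I b, single (ins a i (ins b j c)) (1 : R) := by
  rw [insertionProduct_single_single, map_sum, Finset.sum_comm]
  simp

theorem insertionProduct_insertionProduct_single (ins : ∀ a, I a → B → B)
    (α : ∀ a i b, I a → I (ins a i b)) (β : ∀ a i b, I b → I (ins a i b))
    (hα : ∀ a i b, Injective (α a i b)) (hβ : ∀ a i b, Injective (β a i b))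
    (hdisj : ∀ a i b j k, α a i b j ≠ β a i b k)
    (hcover : ∀ a i b k, (∃ j, α a i b j = k) ∨ ∃ j, β a i b j = k)
    (h1 : ∀ a b c i j, ins (ins a i b) (β a i b j) c = ins a i (ins b j c)) (a b c : B) :
    insertionProduct R ins (insertionProduct R ins (single a 1) (single b 1)) (single c 1) =
      ∑ i : I a, ∑ j : I a, single (ins (ins a i b) (α a i b j) c) (1 : R) +
        ∑ i : I a, ∑ j : I b, single (ins a i (ins b j c)) (1 : R) := by
  simp only [insertionProduct_single_single, map_sum, LinearMap.sum_apply, ← h1 a b c,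
    ← Finset.sum_add_distrib]
  refine Finset.sum_congr rfl fun i _ => ?_
  exact Fintype.sum_eq_sum_comp_add_sum_comp (hα a i b) (hβ a i b) (hdisj a i b)
    (hcover a i b) _

end InsertionSystem

/-- an abstract insertion system on a basis `B` — finite sets `I a` of
insertion positions, insertions `a ⊲ᵢ b`, and injections `α, β` with disjoint covering
images identifying the positions of `a ⊲ᵢ b` with those of `a` and of `b`, compatible
with composition — yields a right pre-Lie product on the free `R`-module on `B` by
`a ⊲ b := Σ_{i ∈ I a} (a ⊲ᵢ b)`. -/
theorem abstract_insertion_system_preLie (R : Type) [CommRing R] (B : Type)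
    (I : B → Type) [∀ a, Fintype (I a)]
    (ins : ∀ a : B, I a → B → B)
    (α : ∀ (a : B) (i : I a) (b : B), I a → I (ins a i b))
    (β : ∀ (a : B) (i : I a) (b : B), I b → I (ins a i b))
    (hα : ∀ a i b, Function.Injective (α a i b))
    (hβ : ∀ a i b, Function.Injective (β a i b))
    (hdisj : ∀ (a : B) (i : I a) (b : B) (j : I a) (k : I b), α a i b j ≠ β a i b k)
    (hcover : ∀ (a : B) (i : I a) (b : B) (k : I (ins a i b)),
      (∃ j, α a i b j = k) ∨ (∃ j, β a i b j = k))
    (h1 : ∀ (a b c : B) (i : I a) (j : I b),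
      ins (ins a i b) (β a i b j) c = ins a i (ins b j c))
    (h2 : ∀ (a b c : B) (i j : I a),
      ins (ins a i b) (α a i b j) c = ins (ins a j c) (α a j c i) b) :
    ∃ T : (B →₀ R) →ₗ[R] (B →₀ R) →ₗ[R] (B →₀ R),
      (∀ a b : B,
        T (Finsupp.single a 1) (Finsupp.single b 1)
          = ∑ i : I a, Finsupp.single (ins a i b) (1 : R)) ∧
      IsPreLie T := by
  refine ⟨insertionProduct R ins, insertionProduct_single_single ins, ?_⟩
  have hassoc (a b c : B) :
      LinearMap.bilinAssociator (insertionProduct R ins) (single a 1) (single b 1) (single c 1) =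
        ∑ i : I a, ∑ j : I a, single (ins (ins a i b) (α a i b j) c) (1 : R) := by
    rw [LinearMap.bilinAssociator_apply, insertionProduct_single_insertionProduct,
      insertionProduct_insertionProduct_single ins α β hα hβ hdisj hcover h1, add_sub_cancel_right]
  refine LinearMap.isPreLie_of_basis Finsupp.basisSingleOne _ fun a b c => ?_
  simp only [coe_basisSingleOne, hassoc, h2 a b c]
  exact Finset.sum_comm
end
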